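/- Let $\mathcal{A} = \{H_1,\dots,H_m\}$ be linear hyperplanes in $\mathbb{R}^n$ with $H_i = \ker\langle\alpha_i,\cdot\rangle$, $T = \bigcap_i H_i$, $U$ a $k$-dimensional subspace with $\dim(U\cap T) = l$, and $\beta_i$ the orthogonal projection of $\alpha_i$ onto $U$. If $I\subseteq[m]$ has $|I| = k-l$ and $\big(U\cap(U^\perp+T^\perp)\big) \oplus \bigcap_{i\in I}H_i = \mathbb{R}^n$, then $\{\beta_i \mid i\in I\}$ is linearly independent. -/

import Mathlib

/-!
The projections `β i` lie in `W = U ⊓ (Uᗮ ⊔ Tᗮ)`, since `α i ∈ Tᗮ` and `α i - β i ∈ Uᗮ`.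
A vector of `W ⊆ U` orthogonal to every `β i` (`i ∈ I`) is orthogonal to every `α i`, so it lies in
`⋂_{i ∈ I} H_i`, hence is zero by the direct sum. Therefore the `β i` span `W`, and
`dim W = dim U - dim (U ⊓ T) = k - l = |I|` forces them to be independent.
-/

open RealInnerProductSpace
open scoped InnerProductSpace

namespace Submodule

variable {𝕜 E : Type*} [RCLike 𝕜] [NormedAddCommGroup E] [InnerProductSpace 𝕜 E]

theorem mem_orthogonal_iInf_ker_innerSL {ι : Type*} (α : ι → E) (i : ι) :
    α i ∈ (⨅ j, LinearMap.ker (innerSL 𝕜 (α j) : E →ₗ[𝕜] 𝕜))ᗮ := by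
  intro x hx
  exact inner_eq_zero_symm.mp (LinearMap.mem_ker.mp ((mem_iInf _).mp hx i))

theorem starProjection_mem_inf_sup_orthogonal {U T : Submodule 𝕜 E} [U.HasOrthogonalProjection]
    {a : E} (ha : a ∈ Tᗮ) : U.starProjection a ∈ U ⊓ (Uᗮ ⊔ Tᗮ) := by
  refine ⟨U.starProjection_apply_mem a, ?_⟩
  rw [← sub_sub_cancel a (U.starProjection a)]
  exact sub_mem (mem_sup_right ha) (mem_sup_left (U.sub_starProjection_mem_orthogonal a))

theorem orthogonal_sup_orthogonal [FiniteDimensional 𝕜 E] (K₁ K₂ : Submodule 𝕜 E) :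
    K₁ᗮ ⊔ K₂ᗮ = (K₁ ⊓ K₂)ᗮ := by
  have h := inf_orthogonal K₁ᗮ K₂ᗮ
  rw [orthogonal_orthogonal, orthogonal_orthogonal] at h
  rw [h, orthogonal_orthogonal]

theorem finrank_inf_sup_orthogonal [FiniteDimensional 𝕜 E] (U T : Submodule 𝕜 E) :
    Module.finrank 𝕜 ↥(U ⊓ (Uᗮ ⊔ Tᗮ)) = Module.finrank 𝕜 U - Module.finrank 𝕜 ↥(U ⊓ T) := by
  have h := finrank_add_inf_finrank_orthogonal (𝕜 := 𝕜) (inf_le_left : U ⊓ T ≤ U)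
  rw [orthogonal_sup_orthogonal, inf_comm]
  omega

theorem span_range_eq_of_forall_inner_eq_zero {ι : Type*} [Finite ι] {W : Submodule 𝕜 E}
    {b : ι → E} (hb : ∀ i, b i ∈ W) (h : ∀ v ∈ W, (∀ i, ⟪b i, v⟫_𝕜 = 0) → v = 0) :
    span 𝕜 (Set.range b) = W := by
  have : FiniteDimensional 𝕜 (span 𝕜 (Set.range b)) :=
    FiniteDimensional.span_of_finite 𝕜 (Set.finite_range b)
  have hle : span 𝕜 (Set.range b) ≤ W := span_le.mpr (Set.range_subset_iff.mpr hb)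
  have hbot : (span 𝕜 (Set.range b))ᗮ ⊓ W = ⊥ := by
    refine eq_bot_iff.mpr fun v ⟨hv, hvW⟩ => (mem_bot 𝕜).mpr (h v hvW fun i => ?_)
    exact hv (b i) (subset_span ⟨i, rfl⟩)
  rw [← sup_orthogonal_inf_of_hasOrthogonalProjection hle, hbot, sup_bot_eq]

end Submodule

open Submodule in
theorem stmt7_general {n m k l : ℕ}
    (α : Fin m → EuclideanSpace ℝ (Fin n))
    (H : Fin m → Submodule ℝ (EuclideanSpace ℝ (Fin n)))
    (hH : ∀ i, H i = LinearMap.ker (innerSL ℝ (α i) : EuclideanSpace ℝ (Fin n) →ₗ[ℝ] ℝ))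
    (T : Submodule ℝ (EuclideanSpace ℝ (Fin n))) (hT : T = ⨅ i, H i)
    (U : Submodule ℝ (EuclideanSpace ℝ (Fin n)))
    (hU : Module.finrank ℝ U = k) (hUT : Module.finrank ℝ ↥(U ⊓ T) = l)
    (β : Fin m → EuclideanSpace ℝ (Fin n))
    (hβ : ∀ i, β i = (U.orthogonalProjectionOnto (α i) : EuclideanSpace ℝ (Fin n)))
    (I : Finset (Fin m)) (hcard : I.card = k - l)
    (hdirect : (U ⊓ (Uᗮ ⊔ Tᗮ)) ⊓ (⨅ i ∈ I, H i) = ⊥ ∧ (U ⊓ (Uᗮ ⊔ Tᗮ)) ⊔ (⨅ i ∈ I, H i) = ⊤) :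
    LinearIndependent ℝ (fun i : I => β i) := by
  obtain rfl : H = _ := funext hH
  have hspan : span ℝ (Set.range fun i : I => β i) = U ⊓ (Uᗮ ⊔ Tᗮ) := by
    refine span_range_eq_of_forall_inner_eq_zero (fun i => ?_) fun v hv hβv => ?_
    · rw [hβ]
      exact starProjection_mem_inf_sup_orthogonal (hT ▸ mem_orthogonal_iInf_ker_innerSL α i)
    · have hvI : v ∈ ⨅ i ∈ I, LinearMap.ker (innerSL ℝ (α i) : _ →ₗ[ℝ] ℝ) := by
        refine (mem_iInf _).mpr fun i => (mem_iInf _).mpr fun hi => LinearMap.mem_ker.mpr ?_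
        calc ⟪α i, v⟫ = ⟪β i, v⟫ := by
              rw [hβ]
              exact (inner_orthogonalProjectionOnto_eq_of_mem_right ⟨v, (mem_inf.mp hv).1⟩ _).symm
          _ = 0 := hβv ⟨i, hi⟩
      rw [← mem_bot ℝ, ← hdirect.1]
      exact ⟨hv, hvI⟩
  rw [linearIndependent_iff_card_eq_finrank_span, Set.finrank, hspan, finrank_inf_sup_orthogonal,
    hU, hUT, Fintype.card_coe, hcard]

theorem stmt7 {n m k l : ℕ}
    (α : Fin m → EuclideanSpace ℝ (Fin n)) (hα : ∀ i, α i ≠ 0)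
    (H : Fin m → Submodule ℝ (EuclideanSpace ℝ (Fin n)))
    (hH : ∀ i, H i = LinearMap.ker (innerSL ℝ (α i) : EuclideanSpace ℝ (Fin n) →ₗ[ℝ] ℝ))
    (T : Submodule ℝ (EuclideanSpace ℝ (Fin n))) (hT : T = ⨅ i, H i)
    (U : Submodule ℝ (EuclideanSpace ℝ (Fin n)))
    (hU : Module.finrank ℝ U = k) (hUT : Module.finrank ℝ ↥(U ⊓ T) = l)
    (β : Fin m → EuclideanSpace ℝ (Fin n))
    (hβ : ∀ i, β i = (U.orthogonalProjectionOnto (α i) : EuclideanSpace ℝ (Fin n)))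
    (I : Finset (Fin m)) (hcard : I.card = k - l)
    (hdirect : (U ⊓ (Uᗮ ⊔ Tᗮ)) ⊓ (⨅ i ∈ I, H i) = ⊥ ∧ (U ⊓ (Uᗮ ⊔ Tᗮ)) ⊔ (⨅ i ∈ I, H i) = ⊤) :
    LinearIndependent ℝ (fun i : I => β i) :=
  stmt7_general α H hH T hT U hU hUT β hβ I hcard hdirect
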